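/- arXiv:2212.12989 — 2 statements merged into one kernel-verified Lean document; each statement's English description precedes it below -/
import Mathlib

section
/- Let K be a T×T positive semidefinite real symmetric matrix with eigenvalues λ_1 ≥ … ≥ λ_T satisfying λ_j ≤ R₀ r^j for all j, for constants R₀ > 0 and 0 < r < 1. Let M be a k×k principal submatrix of K with eigenvalues μ_1 ≥ … ≥ μ_k, and suppose α^{k−1} < ∏_{j=1}^{k−1} μ_j for some α > 0 with α < R₀. Then k < 2 ln(R₀/α) / ln(1/r). -/
/-!
Cauchy interlacing in counting form: if `S` is the compression `V* T V` of `T` along an isometry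
`V`, then for every threshold `c` the number of eigenvalues `≥ c` of `S` is at most that of `T`.
Otherwise `V` maps the span of the eigenvectors of `S` with eigenvalue `≥ c` onto a subspace too
large to avoid the orthogonal complement of the eigenvectors of `T` with eigenvalue `≥ c`, and a
nonzero vector there has Rayleigh quotient both `≥ c` and `< c`. A principal submatrix is such a
compression, so its sorted eigenvalues satisfy `μ_j ≤ λ_j ≤ R₀ r ^ j`. Then
`α ^ (k - 1) < ∏_{j < k} μ_j ≤ R₀ ^ (k - 1) r ^ (k (k - 1) / 2)`, and taking logarithms gives the
bound on `k`.
-/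

open Finset
open scoped RealInnerProductSpace

section Compression

variable {E F ι κ : Type*} [NormedAddCommGroup E] [InnerProductSpace ℝ E]
  [NormedAddCommGroup F] [InnerProductSpace ℝ F] [Fintype ι] [Fintype κ]

namespace OrthonormalBasis

variable {T : E →ₗ[ℝ] E} {b : OrthonormalBasis ι ℝ E} {d : ι → ℝ}

theorem inner_apply_self_eq_sum (hb : ∀ i, T (b i) = d i • b i) (x : E) :
    ⟪T x, x⟫ = ∑ i, d i * ⟪b i, x⟫ ^ 2 := by
  have hTx : T x = ∑ i, (d i * ⟪b i, x⟫) • b i := by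
    conv_lhs => rw [← b.sum_repr' x]
    simp only [map_sum, map_smul, hb, smul_smul, mul_comm]
  rw [hTx, sum_inner]
  refine sum_congr rfl fun i _ => ?_
  rw [real_inner_smul_left]
  ring

theorem mul_norm_sq_le_inner_apply_self (hb : ∀ i, T (b i) = d i • b i) {c : ℝ} {x : E}
    (hx : ∀ i, d i < c → ⟪b i, x⟫ = 0) : c * ‖x‖ ^ 2 ≤ ⟪T x, x⟫ := by
  rw [inner_apply_self_eq_sum hb, ← b.sum_sq_inner_right, mul_sum]
  refine sum_le_sum fun i _ => ?_
  rcases lt_or_ge (d i) c with h | h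
  · simp [hx i h]
  · exact mul_le_mul_of_nonneg_right h (sq_nonneg _)

theorem inner_apply_self_lt_mul_norm_sq (hb : ∀ i, T (b i) = d i • b i) {c : ℝ} {x : E}
    (hx₀ : x ≠ 0) (hx : ∀ i, c ≤ d i → ⟪b i, x⟫ = 0) : ⟪T x, x⟫ < c * ‖x‖ ^ 2 := by
  obtain ⟨i, hi⟩ : ∃ i, ⟪b i, x⟫ ≠ 0 := by
    by_contra! h
    exact hx₀ (by simpa [h] using (b.sum_repr' x).symm)
  rw [inner_apply_self_eq_sum hb, ← b.sum_sq_inner_right, mul_sum]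
  refine sum_lt_sum (fun j _ => ?_) ⟨i, mem_univ i, ?_⟩
  · rcases le_or_gt c (d j) with h | h
    · simp [hx j h]
    · exact mul_le_mul_of_nonneg_right h.le (sq_nonneg _)
  · exact mul_lt_mul_of_pos_right (lt_of_not_ge (hi ∘ hx i)) (pow_two_pos_of_ne_zero hi)

theorem inner_eq_zero_of_mem_span {s : Set ι} {i : ι} (hi : i ∉ s) {x : E}
    (hx : x ∈ Submodule.span ℝ (b '' s)) : ⟪b i, x⟫ = 0 := by
  refine Submodule.mem_orthogonal_singleton_iff_inner_right.mp
    (Submodule.span_le.mpr ?_ hx)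
  rintro _ ⟨j, hj, rfl⟩
  exact Submodule.mem_orthogonal_singleton_iff_inner_right.mpr
    (b.orthonormal.inner_eq_zero (ne_of_mem_of_not_mem hj hi).symm)

end OrthonormalBasis

theorem card_filter_le_le_of_compression {T : E →ₗ[ℝ] E} {S : F →ₗ[ℝ] F} (V : F →ₗᵢ[ℝ] E)
    (hS : ∀ w, ⟪S w, w⟫ = ⟪T (V w), V w⟫)
    {b : OrthonormalBasis ι ℝ E} {d : ι → ℝ} (hb : ∀ i, T (b i) = d i • b i)
    {e : OrthonormalBasis κ ℝ F} {d' : κ → ℝ} (he : ∀ i, S (e i) = d' i • e i) (c : ℝ) :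
    #{i | c ≤ d' i} ≤ #{i | c ≤ d i} := by
  set W := Submodule.span ℝ (e '' {i | c ≤ d' i}) with hW_def
  have : FiniteDimensional ℝ W := FiniteDimensional.span_of_finite ℝ (Set.toFinite _)
  have hW : Module.finrank ℝ W = #{i | c ≤ d' i} := by
    rw [hW_def, Set.image_eq_range, ← Fintype.card_subtype]
    exact finrank_span_eq_card (b := fun i : {i // c ≤ d' i} => e i)
      (e.orthonormal.linearIndependent.comp _ Subtype.val_injective)
  let Φ : W →ₗ[ℝ] ({i // c ≤ d i} → ℝ) :=
    LinearMap.pi (fun i => innerₗ E (b i)) ∘ₗ V.toLinearMap ∘ₗ W.subtype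
  by_contra! hlt
  obtain ⟨w, hwΦ, hw₀⟩ := (Submodule.ne_bot_iff _).mp (Φ.ker_ne_bot_of_finrank_lt (by
    rwa [Module.finrank_fintype_fun_eq_card, hW, Fintype.card_subtype]))
  have hVw : V w ≠ 0 := (map_ne_zero_iff _ V.injective).mpr (by simpa using hw₀)
  have hker : ∀ i, c ≤ d i → ⟪b i, V w⟫ = 0 := fun i hi => by
    simpa [Φ] using congrFun (LinearMap.mem_ker.mp hwΦ) ⟨i, hi⟩
  have hlow : c * ‖(w : F)‖ ^ 2 ≤ ⟪S w, w⟫ :=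
    e.mul_norm_sq_le_inner_apply_self he fun i hi =>
      e.inner_eq_zero_of_mem_span (s := {i | c ≤ d' i}) (by simpa using hi) w.2
  have hup : ⟪T (V w), V w⟫ < c * ‖V w‖ ^ 2 := b.inner_apply_self_lt_mul_norm_sq hb hVw hker
  rw [hS] at hlow
  rw [LinearIsometry.norm_map] at hup
  exact (hlow.trans_lt hup).false

end Compression

namespace Matrix

variable {m n : Type*} [Fintype n] [DecidableEq n]

theorem IsHermitian.toEuclideanLin_eigenvectorBasis {A : Matrix n n ℝ} (hA : A.IsHermitian)
    (i : n) :
    toEuclideanLin A (hA.eigenvectorBasis i) = hA.eigenvalues i • hA.eigenvectorBasis i := by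
  ext j
  simpa [toLpLin_apply] using congrFun (hA.mulVec_eigenvectorBasis i) j

theorem submatrix_eq_one_submatrix_mul_mul {α : Type*} [NonAssocSemiring α]
    (M : Matrix n n α) (f : m → n) :
    M.submatrix f f =
      (1 : Matrix n n α).submatrix f id * M * (1 : Matrix n n α).submatrix id f := by
  ext i j
  simp [mul_apply, one_apply]

theorem exists_linearIsometry_inner_submatrix [Fintype m] [DecidableEq m] (A : Matrix n n ℝ)
    {f : m → n} (hf : Function.Injective f) :
    ∃ V : EuclideanSpace ℝ m →ₗᵢ[ℝ] EuclideanSpace ℝ n,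
      ∀ w, ⟪toEuclideanLin (A.submatrix f f) w, w⟫ = ⟪toEuclideanLin A (V w), V w⟫ := by
  set P := (1 : Matrix n n ℝ).submatrix id f
  have hcompress (M : Matrix n n ℝ) (w : EuclideanSpace ℝ m) :
      ⟪toEuclideanLin (M.submatrix f f) w, w⟫
        = ⟪toEuclideanLin M (toEuclideanLin P w), toEuclideanLin P w⟫ := by
    have hPt : (1 : Matrix n n ℝ).submatrix f id = Pᴴ := by
      simp [P, conjTranspose_eq_transpose_of_trivial, transpose_submatrix]
    rw [submatrix_eq_one_submatrix_mul_mul, hPt, toLpLin_mul_same, toLpLin_mul_same,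
      toEuclideanLin_conjTranspose_eq_adjoint, LinearMap.comp_apply, LinearMap.comp_apply,
      LinearMap.adjoint_inner_left]
  refine ⟨{ toLinearMap := toEuclideanLin P, norm_map' := fun w => ?_ }, hcompress A⟩
  have h : ‖w‖ ^ 2 = ‖toEuclideanLin P w‖ ^ 2 := by
    simpa [submatrix_one f hf, real_inner_self_eq_norm_sq] using hcompress 1 w
  exact (sq_eq_sq₀ (norm_nonneg _) (norm_nonneg _)).mp h.symm

theorem IsHermitian.card_filter_le_eigenvalues_submatrix_le [Fintype m] [DecidableEq m]
    {A : Matrix n n ℝ} (hA : A.IsHermitian) {f : m → n} (hf : Function.Injective f)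
    (hB : (A.submatrix f f).IsHermitian) (c : ℝ) :
    #{i | c ≤ hB.eigenvalues i} ≤ #{i | c ≤ hA.eigenvalues i} := by
  obtain ⟨V, hV⟩ := exists_linearIsometry_inner_submatrix A hf
  exact card_filter_le_le_of_compression V hV hA.toEuclideanLin_eigenvectorBasis
    hB.toEuclideanLin_eigenvectorBasis c

end Matrix

theorem le_card_filter_le_iff {n : ℕ} {ev : Fin n → ℝ} {g : ℕ → ℝ}
    (hg : ∀ i j, 1 ≤ i → i ≤ j → j ≤ n → g j ≤ g i)
    {σ : Equiv.Perm (Fin n)} (hσ : ∀ i : Fin n, g (i + 1) = ev (σ i))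
    {j : ℕ} (hj : 1 ≤ j) (hjn : j ≤ n) (c : ℝ) :
    j ≤ #{i | c ≤ ev i} ↔ c ≤ g j := by
  have hcard : #{i : Fin n | c ≤ g (i + 1)} = #{i | c ≤ ev i} :=
    card_equiv σ fun i => by simp [hσ]
  rw [← hcard]
  constructor
  · intro h
    by_contra! hlt
    have hsub :
        ({i | c ≤ g (i + 1)} : Finset (Fin n)) ⊆ ({i | (i : ℕ) < j - 1} : Finset (Fin n)) := by
      intro i hi
      simp only [mem_filter, mem_univ, true_and] at hi ⊢
      by_contra! hij
      exact (hi.trans (hg j (i + 1) hj (by omega) (by omega))).not_gt hlt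
    have := (card_le_card hsub).trans_eq Fin.card_filter_val_lt
    omega
  · intro h
    have hsub :
        ({i | (i : ℕ) < j} : Finset (Fin n)) ⊆ ({i | c ≤ g (i + 1)} : Finset (Fin n)) := by
      intro i hi
      simp only [mem_filter, mem_univ, true_and] at hi ⊢
      exact h.trans (hg (i + 1) j (by omega) (by omega) hjn)
    have := card_le_card hsub
    rw [Fin.card_filter_val_lt] at this
    omega

theorem lt_two_mul_log_div_log_of_pow_lt_prod {m : ℕ} {α R r : ℝ} (hα : 0 < α) (hR : 0 < R)
    (hr₀ : 0 < r) (hr₁ : r < 1) (h : α ^ m < ∏ j ∈ Icc 1 m, R * r ^ j) :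
    (m + 1 : ℝ) < 2 * Real.log (R / α) / Real.log (1 / r) := by
  have hm : m ≠ 0 := by
    rintro rfl
    simp at h
  have gauss : (∑ j ∈ Icc 1 m, j) * 2 = m * (m + 1) := by
    clear h hm
    induction m with
    | zero => simp
    | succ k ih => rw [sum_Icc_succ_top (by omega), add_mul, ih]; ring
  -- Squaring turns `r ^ (m (m + 1) / 2)` into `(r ^ (m + 1)) ^ m`.
  have hsq : (α ^ 2) ^ m < (R ^ 2 * r ^ (m + 1)) ^ m := calc
    (α ^ 2) ^ m = (α ^ m) ^ 2 := by ring
    _ < (∏ j ∈ Icc 1 m, R * r ^ j) ^ 2 := pow_lt_pow_left₀ h (by positivity) two_ne_zero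
    _ = (R ^ 2 * r ^ (m + 1)) ^ m := by
      rw [prod_mul_distrib, prod_const, prod_pow_eq_pow_sum, Nat.card_Icc, Nat.add_sub_cancel,
        mul_pow, ← pow_mul, ← pow_mul, gauss, mul_pow, ← pow_mul, ← pow_mul]
      ring_nf
  have hlog := Real.log_lt_log (by positivity)
    ((pow_lt_pow_iff_left₀ (by positivity) (by positivity) hm).mp hsq)
  rw [Real.log_pow, Real.log_mul (by positivity) (by positivity), Real.log_pow, Real.log_pow]
    at hlog
  rw [lt_div_iff₀ (Real.log_pos (by rw [one_div]; exact one_lt_inv₀ hr₀ |>.mpr hr₁)),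
    Real.log_div hR.ne' hα.ne', one_div, Real.log_inv]
  push_cast at hlog
  linarith

theorem stmt4_general (T k : ℕ) (hk : 0 < k) (hkT : k ≤ T)
    (K : Matrix (Fin T) (Fin T) ℝ) (hpsd : K.PosSemidef)
    (lam : ℕ → ℝ)
    (hlam_dec : ∀ i j, 1 ≤ i → i ≤ j → j ≤ T → lam j ≤ lam i)
    (hlam_spec : ∃ σ : Equiv.Perm (Fin T), ∀ i : Fin T,
      lam ((i : ℕ) + 1) = hpsd.1.eigenvalues (σ i))
    (R₀ r : ℝ) (hR : 0 < R₀) (hr0 : 0 < r) (hr1 : r < 1)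
    (hdecay : ∀ j ∈ Finset.Icc 1 T, lam j ≤ R₀ * r ^ j)
    (f : Fin k → Fin T) (hf : StrictMono f)
    (hBpsd : (K.submatrix f f).PosSemidef)
    (mu : ℕ → ℝ)
    (hmu_dec : ∀ i j, 1 ≤ i → i ≤ j → j ≤ k → mu j ≤ mu i)
    (hmu_spec : ∃ σ : Equiv.Perm (Fin k), ∀ i : Fin k,
      mu ((i : ℕ) + 1) = hBpsd.1.eigenvalues (σ i))
    (α : ℝ) (hα : 0 < α)
    (hprod : α ^ (k - 1) < ∏ j ∈ Finset.Icc 1 (k - 1), mu j) :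
    (k : ℝ) < 2 * Real.log (R₀ / α) / Real.log (1 / r) := by
  obtain ⟨σ, hσ⟩ := hlam_spec
  obtain ⟨τ, hτ⟩ := hmu_spec
  have hmu_le : ∀ j ∈ Icc 1 (k - 1), mu j ≤ R₀ * r ^ j := by
    intro j hj
    rw [mem_Icc] at hj
    have hjk : j ≤ k := by omega
    have hinterlace : mu j ≤ lam j :=
      (le_card_filter_le_iff hlam_dec hσ hj.1 (hjk.trans hkT) _).mp
        (((le_card_filter_le_iff hmu_dec hτ hj.1 hjk _).mpr le_rfl).trans
          (hpsd.1.card_filter_le_eigenvalues_submatrix_le hf.injective hBpsd.1 _))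
    exact hinterlace.trans (hdecay j (mem_Icc.mpr ⟨hj.1, by omega⟩))
  have hmu_nonneg : ∀ j ∈ Icc 1 (k - 1), 0 ≤ mu j := by
    intro j hj
    rw [mem_Icc] at hj
    obtain ⟨i, rfl⟩ : ∃ i : Fin k, j = i + 1 := ⟨⟨j - 1, by omega⟩, (Nat.sub_add_cancel hj.1).symm⟩
    exact (hτ i).symm ▸ hBpsd.eigenvalues_nonneg _
  have hbound := lt_two_mul_log_div_log_of_pow_lt_prod hα hR hr0 hr1
    (hprod.trans_le (prod_le_prod hmu_nonneg hmu_le))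
  rwa [← Nat.cast_add_one, Nat.sub_add_cancel hk] at hbound

theorem stmt4 (T k : ℕ) (hk : 0 < k) (hkT : k ≤ T)
    (K : Matrix (Fin T) (Fin T) ℝ) (hsym : K.IsSymm) (hpsd : K.PosSemidef)
    (lam : ℕ → ℝ)
    (hlam_dec : ∀ i j, 1 ≤ i → i ≤ j → j ≤ T → lam j ≤ lam i)
    (hlam_spec : ∃ σ : Equiv.Perm (Fin T), ∀ i : Fin T,
      lam ((i : ℕ) + 1) = hpsd.1.eigenvalues (σ i))
    (R₀ r : ℝ) (hR : 0 < R₀) (hr0 : 0 < r) (hr1 : r < 1)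
    (hdecay : ∀ j ∈ Finset.Icc 1 T, lam j ≤ R₀ * r ^ j)
    (f : Fin k → Fin T) (hf : StrictMono f)
    (hBpsd : (K.submatrix f f).PosSemidef)
    (mu : ℕ → ℝ)
    (hmu_dec : ∀ i j, 1 ≤ i → i ≤ j → j ≤ k → mu j ≤ mu i)
    (hmu_spec : ∃ σ : Equiv.Perm (Fin k), ∀ i : Fin k,
      mu ((i : ℕ) + 1) = hBpsd.1.eigenvalues (σ i))
    (α : ℝ) (hα : 0 < α) (hαR : α < R₀)
    (hprod : α ^ (k - 1) < ∏ j ∈ Finset.Icc 1 (k - 1), mu j) :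
    (k : ℝ) < 2 * Real.log (R₀ / α) / Real.log (1 / r) :=
  stmt4_general T k hk hkT K hpsd lam hlam_dec hlam_spec R₀ r hR hr0 hr1 hdecay f hf hBpsd mu
    hmu_dec hmu_spec α hα hprod
end

section
/- Let K be a T×T positive semidefinite real symmetric matrix with eigenvalues λ_1 ≥ … ≥ λ_T satisfying λ_j ≤ R₀ j^{−p} for all j, for constants R₀ > 0 and p ≥ 1. Let M be a k×k principal submatrix of K with eigenvalues μ_1 ≥ … ≥ μ_k, and suppose α^{k−1} < ∏_{j=1}^{k−1} μ_j for some 0 < α ≤ R₀. Then ((k−1)!)^p < (R₀/α)^{k−1}, and consequently k ≤ e·(R₀/α)^{1/p} + 1. -/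
/-
Cauchy interlacing `μ_j ≤ λ_j` is proved in the sorting-free form `#{μ ≥ c} ≤ #{λ ≥ c}`:
otherwise a dimension count gives a nonzero `y` in the span of the eigenvectors of `M` with
eigenvalue `≥ c` whose extension by zero `x` is orthogonal to every eigenvector of `K` with
eigenvalue `≥ c`, and then `c ≤ yᵀMy / yᵀy = xᵀKx / xᵀx < c`. Hence
`α^(k-1) < ∏_{j<k} μ_j ≤ ∏_{j<k} R₀ j^(-p) = R₀^(k-1) ((k-1)!)^(-p)`,
and `n! ≥ (n/e)^n` turns `((k-1)!)^p < (R₀/α)^(k-1)` into `k - 1 < e (R₀/α)^(1/p)`.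
-/

open Matrix Finset Real
open scoped Nat

theorem OrthonormalBasis.dotProduct_eq_sum_mul {n : Type*} [Fintype n]
    (b : OrthonormalBasis n ℝ (EuclideanSpace ℝ n)) (x y : n → ℝ) :
    x ⬝ᵥ y = ∑ i, (⇑(b i) ⬝ᵥ x) * (⇑(b i) ⬝ᵥ y) := by
  have := b.sum_inner_mul_inner (WithLp.toLp 2 x) (WithLp.toLp 2 y)
  simp only [EuclideanSpace.inner_eq_star_dotProduct, star_trivial] at this
  rw [dotProduct_comm, ← this]
  simp_rw [dotProduct_comm y]

theorem OrthonormalBasis.dotProduct_apply_apply {n : Type*} [Fintype n] [DecidableEq n]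
    (b : OrthonormalBasis n ℝ (EuclideanSpace ℝ n)) (i j : n) :
    ⇑(b i) ⬝ᵥ ⇑(b j) = if i = j then 1 else 0 := by
  have := orthonormal_iff_ite.mp b.orthonormal i j
  simpa [EuclideanSpace.inner_eq_star_dotProduct, dotProduct_comm] using this

theorem OrthonormalBasis.exists_ne_zero_dotProduct_eq_zero {m ι : Type*} [Fintype m]
    [DecidableEq m] [Fintype ι] (b : OrthonormalBasis m ℝ (EuclideanSpace ℝ m))
    (P : Finset m) (w : ι → m → ℝ) (hcard : Fintype.card ι < #P) :
    ∃ y : m → ℝ, y ≠ 0 ∧ (∀ p ∉ P, ⇑(b p) ⬝ᵥ y = 0) ∧ ∀ i, w i ⬝ᵥ y = 0 := by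
  let M : Matrix ι P ℝ := fun i p => w i ⬝ᵥ ⇑(b p)
  have hker : LinearMap.ker M.mulVecLin ≠ ⊥ :=
    LinearMap.ker_ne_bot_of_finrank_lt (by simpa using hcard)
  obtain ⟨a, ha, ha0⟩ := (Submodule.ne_bot_iff _).mp hker
  have hbasis : ∀ q, ⇑(b q) ⬝ᵥ ∑ p : P, a p • ⇑(b p) =
      ∑ p : P, if q = p then a p else 0 := by
    intro q
    simp only [dotProduct_sum, dotProduct_smul, b.dotProduct_apply_apply, smul_eq_mul,
      mul_ite, mul_one, mul_zero]
  refine ⟨∑ p : P, a p • ⇑(b p), fun hy => ha0 ?_, fun q hq => ?_, fun i => ?_⟩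
  · ext p
    have hp := hbasis p
    rw [hy, dotProduct_zero] at hp
    simpa using hp.symm
  · rw [hbasis]
    exact sum_eq_zero fun p _ => if_neg (by rintro rfl; exact hq p.2)
  · calc w i ⬝ᵥ ∑ p : P, a p • ⇑(b p) = (M *ᵥ a) i := by
          rw [dotProduct_sum]
          exact sum_congr rfl fun p _ => by rw [dotProduct_smul, smul_eq_mul, mul_comm]
      _ = 0 := congrFun (LinearMap.mem_ker.mp ha) i

namespace Matrix.IsHermitian

variable {n : Type*} [Fintype n] [DecidableEq n] {A : Matrix n n ℝ} (hA : A.IsHermitian)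

theorem eigenvectorBasis_dotProduct_mulVec (i : n) (x : n → ℝ) :
    ⇑(hA.eigenvectorBasis i) ⬝ᵥ (A *ᵥ x) =
      hA.eigenvalues i * (⇑(hA.eigenvectorBasis i) ⬝ᵥ x) := by
  rw [dotProduct_mulVec, ← mulVec_transpose, ← conjTranspose_eq_transpose_of_trivial, hA,
    mulVec_eigenvectorBasis, smul_dotProduct, smul_eq_mul]

theorem dotProduct_mulVec_eq_sum (x : n → ℝ) :
    x ⬝ᵥ (A *ᵥ x) = ∑ i, hA.eigenvalues i * (⇑(hA.eigenvectorBasis i) ⬝ᵥ x) ^ 2 := by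
  rw [hA.eigenvectorBasis.dotProduct_eq_sum_mul]
  refine sum_congr rfl fun i _ => ?_
  rw [hA.eigenvectorBasis_dotProduct_mulVec]
  ring

theorem le_dotProduct_mulVec_of_forall_lt {c : ℝ} {x : n → ℝ}
    (hx : ∀ i, hA.eigenvalues i < c → ⇑(hA.eigenvectorBasis i) ⬝ᵥ x = 0) :
    c * (x ⬝ᵥ x) ≤ x ⬝ᵥ (A *ᵥ x) := by
  rw [hA.dotProduct_mulVec_eq_sum, hA.eigenvectorBasis.dotProduct_eq_sum_mul, mul_sum]
  refine sum_le_sum fun i _ => ?_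
  rcases lt_or_ge (hA.eigenvalues i) c with hi | hi
  · simp [hx i hi]
  · nlinarith [sq_nonneg (⇑(hA.eigenvectorBasis i) ⬝ᵥ x)]

theorem dotProduct_mulVec_lt_of_forall_le {c : ℝ} {x : n → ℝ} (hx0 : x ≠ 0)
    (hx : ∀ i, c ≤ hA.eigenvalues i → ⇑(hA.eigenvectorBasis i) ⬝ᵥ x = 0) :
    x ⬝ᵥ (A *ᵥ x) < c * (x ⬝ᵥ x) := by
  obtain ⟨i₀, hi₀⟩ : ∃ i, ⇑(hA.eigenvectorBasis i) ⬝ᵥ x ≠ 0 := by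
    by_contra! h
    apply hx0
    rw [← dotProduct_self_eq_zero, hA.eigenvectorBasis.dotProduct_eq_sum_mul]
    simp [h]
  rw [hA.dotProduct_mulVec_eq_sum, hA.eigenvectorBasis.dotProduct_eq_sum_mul, mul_sum]
  refine sum_lt_sum (fun i _ => ?_) ⟨i₀, mem_univ _, ?_⟩
  · rcases lt_or_ge (hA.eigenvalues i) c with hi | hi
    · nlinarith [sq_nonneg (⇑(hA.eigenvectorBasis i) ⬝ᵥ x)]
    · simp [hx i hi]
  · have hi₀c : hA.eigenvalues i₀ < c := by
      by_contra! h
      exact hi₀ (hx i₀ h)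
    nlinarith [sq_pos_of_ne_zero hi₀]

end Matrix.IsHermitian

section Extend

variable {R m n : Type*} [CommSemiring R] [Fintype m] [Fintype n] {f : m → n}

theorem dotProduct_extend_zero (hf : Function.Injective f) (g : n → R) (y : m → R) :
    g ⬝ᵥ Function.extend f y 0 = (g ∘ f) ⬝ᵥ y := by
  classical
  have hsupp : ∀ t ∉ univ.map ⟨f, hf⟩, g t * Function.extend f y 0 t = 0 := by
    intro t ht
    rw [Function.extend_apply' _ _ _ (by simpa using ht), Pi.zero_apply, mul_zero]
  rw [dotProduct, ← sum_subset (subset_univ _) (fun t _ => hsupp t), sum_map]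
  simp [dotProduct, hf.extend_apply]

theorem extend_dotProduct_mulVec_extend (hf : Function.Injective f) (A : Matrix n n R)
    (y : m → R) :
    Function.extend f y 0 ⬝ᵥ (A *ᵥ Function.extend f y 0) =
      y ⬝ᵥ (A.submatrix f f *ᵥ y) := by
  rw [dotProduct_comm, dotProduct_extend_zero hf, dotProduct_comm]
  congr 1
  ext s
  exact dotProduct_extend_zero hf (A (f s)) y

end Extend

theorem Matrix.IsHermitian.card_filter_le_eigenvalues_submatrix {m n : Type*} [Fintype m]
    [DecidableEq m] [Fintype n] [DecidableEq n] {A : Matrix n n ℝ} (hA : A.IsHermitian)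
    {f : m → n} (hf : Function.Injective f) (hB : (A.submatrix f f).IsHermitian) (c : ℝ) :
    #{p | c ≤ hB.eigenvalues p} ≤ #{i | c ≤ hA.eigenvalues i} := by
  by_contra! hlt
  obtain ⟨y, hy0, hyP, hyQ⟩ := hB.eigenvectorBasis.exists_ne_zero_dotProduct_eq_zero
    {p | c ≤ hB.eigenvalues p}
    (fun i : ({i | c ≤ hA.eigenvalues i} : Finset n) => ⇑(hA.eigenvectorBasis i) ∘ f)
    (by rwa [Fintype.card_coe])
  set x := Function.extend f y 0
  have hxy : x ∘ f = y := funext (hf.extend_apply y 0)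
  have hx0 : x ≠ 0 := fun hx => hy0 (by rw [← hxy, hx]; rfl)
  have hlow : c * (y ⬝ᵥ y) ≤ y ⬝ᵥ (A.submatrix f f *ᵥ y) :=
    hB.le_dotProduct_mulVec_of_forall_lt fun p hp => hyP p (by simpa using hp)
  have hup : x ⬝ᵥ (A *ᵥ x) < c * (x ⬝ᵥ x) :=
    hA.dotProduct_mulVec_lt_of_forall_le hx0 fun i hi => by
      rw [dotProduct_extend_zero hf]
      exact hyQ ⟨i, by simpa using hi⟩
  rw [extend_dotProduct_mulVec_extend hf, dotProduct_extend_zero hf, hxy] at hup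
  linarith

theorem le_of_forall_card_filter_le {T k : ℕ} {lam mu : ℕ → ℝ}
    (hlam : ∀ i j, 1 ≤ i → i ≤ j → j ≤ T → lam j ≤ lam i)
    (hmu : ∀ i j, 1 ≤ i → i ≤ j → j ≤ k → mu j ≤ mu i)
    (hcard : ∀ c, #{i : Fin k | c ≤ mu (i + 1)} ≤ #{i : Fin T | c ≤ lam (i + 1)})
    {j : ℕ} (hj1 : 1 ≤ j) (hjk : j ≤ k) : mu j ≤ lam j := by
  by_contra! hlt
  have hmu_head : j ≤ #{i : Fin k | mu j ≤ mu (i + 1)} := by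
    simpa using card_le_card_of_injOn (s := univ) (Fin.castLE hjk)
      (fun i _ => by simpa using hmu (i + 1) j (by omega) i.2 hjk)
      (Fin.castLE_injective hjk).injOn
  have hlam_head : #{i : Fin T | mu j ≤ lam (i + 1)} ≤ j - 1 := by
    simpa using card_le_card_of_injOn (t := range (j - 1)) Fin.val
      (fun i hi => by
        have hdec := hlam j (i + 1) hj1
        simp only [coe_filter, mem_univ, true_and, Set.mem_ofPred_eq, coe_range,
          Set.mem_Iio] at hi ⊢
        by_contra!
        linarith [hdec (by omega) i.2])
      Fin.val_injective.injOn
  have hcount := hcard (mu j)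
  omega

theorem Matrix.IsHermitian.sorted_eigenvalues_submatrix_le {T k : ℕ}
    {A : Matrix (Fin T) (Fin T) ℝ} (hA : A.IsHermitian) {f : Fin k → Fin T}
    (hf : Function.Injective f) (hB : (A.submatrix f f).IsHermitian) {lam mu : ℕ → ℝ}
    (hlam : ∀ i j, 1 ≤ i → i ≤ j → j ≤ T → lam j ≤ lam i) {σ : Equiv.Perm (Fin T)}
    (hσ : ∀ i : Fin T, lam ((i : ℕ) + 1) = hA.eigenvalues (σ i))
    (hmu : ∀ i j, 1 ≤ i → i ≤ j → j ≤ k → mu j ≤ mu i) {τ : Equiv.Perm (Fin k)}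
    (hτ : ∀ i : Fin k, mu ((i : ℕ) + 1) = hB.eigenvalues (τ i))
    {j : ℕ} (hj1 : 1 ≤ j) (hjk : j ≤ k) : mu j ≤ lam j :=
  le_of_forall_card_filter_le hlam hmu (fun c =>
    calc #{i : Fin k | c ≤ mu (i + 1)} = #{p | c ≤ hB.eigenvalues p} :=
          card_equiv τ (by simp [hτ])
      _ ≤ #{i | c ≤ hA.eigenvalues i} := hA.card_filter_le_eigenvalues_submatrix hf hB c
      _ = #{i : Fin T | c ≤ lam (i + 1)} := (card_equiv σ (by simp [hσ])).symm) hj1 hjk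

theorem prod_Icc_mul_rpow_neg (N : ℕ) (R p : ℝ) :
    ∏ j ∈ Icc 1 N, R * (j : ℝ) ^ (-p) = R ^ N * (N ! : ℝ) ^ (-p) := by
  have hfact : ∏ j ∈ Icc 1 N, (j : ℝ) = N ! := by
    rw [← Nat.cast_prod, ← Ico_add_one_right_eq_Icc, prod_Ico_id_eq_factorial]
  rw [prod_mul_distrib, prod_const, Nat.card_Icc, Nat.add_sub_cancel,
    finsetProd_rpow _ _ (fun j _ => Nat.cast_nonneg j), hfact]

theorem factorial_rpow_lt_div_pow {N : ℕ} {α R p : ℝ} (hα : 0 < α)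
    (h : α ^ N < R ^ N * (N ! : ℝ) ^ (-p)) : (N ! : ℝ) ^ p < (R / α) ^ N := by
  have hF : (0 : ℝ) < N ! := by positivity
  rw [div_pow, lt_div_iff₀ (by positivity)]
  calc (N ! : ℝ) ^ p * α ^ N < (N ! : ℝ) ^ p * (R ^ N * (N ! : ℝ) ^ (-p)) := by gcongr
    _ = R ^ N := by rw [mul_left_comm, ← rpow_add hF, add_neg_cancel, rpow_zero, mul_one]

theorem div_exp_one_pow_le_factorial (n : ℕ) : ((n : ℝ) / exp 1) ^ n ≤ n ! := by
  have h := pow_div_factorial_le_exp (n : ℝ) (Nat.cast_nonneg n) n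
  rw [div_le_iff₀ (by positivity), ← exp_one_pow] at h
  rw [div_pow, div_le_iff₀ (by positivity)]
  linarith

theorem nat_lt_exp_one_mul_rpow_of_factorial_rpow_lt {N : ℕ} {Q p : ℝ} (hQ : 0 ≤ Q)
    (hp : 0 < p) (h : (N ! : ℝ) ^ p < Q ^ N) : (N : ℝ) < exp 1 * Q ^ (1 / p) := by
  have hN : N ≠ 0 := by rintro rfl; simp at h
  have ha : 0 ≤ (N : ℝ) / exp 1 := by positivity
  have hpow : (((N : ℝ) / exp 1) ^ p) ^ N < Q ^ N :=
    calc (((N : ℝ) / exp 1) ^ p) ^ N = (((N : ℝ) / exp 1) ^ N) ^ p := by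
          rw [← rpow_natCast, ← rpow_natCast, ← rpow_mul ha, ← rpow_mul ha, mul_comm]
      _ ≤ (N ! : ℝ) ^ p := by gcongr; exact div_exp_one_pow_le_factorial N
      _ < Q ^ N := h
  have hlt : (N : ℝ) / exp 1 < Q ^ (1 / p) := by
    rw [one_div, lt_rpow_inv_iff_of_pos ha hQ hp]
    exact lt_of_pow_lt_pow_left₀ N hQ hpow
  rwa [div_lt_iff₀ (exp_pos 1), mul_comm] at hlt

theorem stmt5_general (T k : ℕ) (hk : 0 < k) (hkT : k ≤ T)
    (K : Matrix (Fin T) (Fin T) ℝ) (hpsd : K.PosSemidef)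
    (lam : ℕ → ℝ)
    (hlam_dec : ∀ i j, 1 ≤ i → i ≤ j → j ≤ T → lam j ≤ lam i)
    (hlam_spec : ∃ σ : Equiv.Perm (Fin T), ∀ i : Fin T,
      lam ((i : ℕ) + 1) = hpsd.1.eigenvalues (σ i))
    (R₀ p : ℝ) (hR : 0 < R₀) (hp : 1 ≤ p)
    (hdecay : ∀ j ∈ Finset.Icc 1 T, lam j ≤ R₀ * (j : ℝ) ^ (-p))
    (f : Fin k → Fin T) (hf : StrictMono f)
    (hBpsd : (K.submatrix f f).PosSemidef)
    (mu : ℕ → ℝ)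
    (hmu_dec : ∀ i j, 1 ≤ i → i ≤ j → j ≤ k → mu j ≤ mu i)
    (hmu_spec : ∃ σ : Equiv.Perm (Fin k), ∀ i : Fin k,
      mu ((i : ℕ) + 1) = hBpsd.1.eigenvalues (σ i))
    (α : ℝ) (hα0 : 0 < α)
    (hprod : α ^ (k - 1) < ∏ j ∈ Finset.Icc 1 (k - 1), mu j) :
    ((Nat.factorial (k - 1) : ℝ)) ^ p < (R₀ / α) ^ (k - 1) ∧
      (k : ℝ) ≤ Real.exp 1 * (R₀ / α) ^ (1 / p) + 1 := by
  obtain ⟨σ, hσ⟩ := hlam_spec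
  obtain ⟨τ, hτ⟩ := hmu_spec
  have hmu_nonneg : ∀ j ∈ Icc 1 (k - 1), 0 ≤ mu j := by
    intro j hj
    obtain ⟨hj1, hjk⟩ := mem_Icc.mp hj
    have h := hτ ⟨j - 1, by omega⟩
    rw [Nat.sub_add_cancel hj1] at h
    exact h ▸ hBpsd.eigenvalues_nonneg _
  have hmu_le : ∀ j ∈ Icc 1 (k - 1), mu j ≤ R₀ * (j : ℝ) ^ (-p) := by
    intro j hj
    rw [mem_Icc] at hj
    exact (hpsd.1.sorted_eigenvalues_submatrix_le hf.injective hBpsd.1 hlam_dec hσ hmu_dec hτ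
      hj.1 (by omega)).trans (hdecay j (mem_Icc.mpr ⟨hj.1, by omega⟩))
  have hfact : ((k - 1)! : ℝ) ^ p < (R₀ / α) ^ (k - 1) :=
    factorial_rpow_lt_div_pow hα0 <| (hprod.trans_le (prod_le_prod hmu_nonneg hmu_le)).trans_eq
      (prod_Icc_mul_rpow_neg _ _ _)
  refine ⟨hfact, ?_⟩
  have hbound := nat_lt_exp_one_mul_rpow_of_factorial_rpow_lt (by positivity) (by linarith) hfact
  rw [Nat.cast_sub hk, Nat.cast_one] at hbound
  linarith

theorem stmt5 (T k : ℕ) (hk : 0 < k) (hkT : k ≤ T)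
    (K : Matrix (Fin T) (Fin T) ℝ) (hsym : K.IsSymm) (hpsd : K.PosSemidef)
    (lam : ℕ → ℝ)
    (hlam_dec : ∀ i j, 1 ≤ i → i ≤ j → j ≤ T → lam j ≤ lam i)
    (hlam_spec : ∃ σ : Equiv.Perm (Fin T), ∀ i : Fin T,
      lam ((i : ℕ) + 1) = hpsd.1.eigenvalues (σ i))
    (R₀ p : ℝ) (hR : 0 < R₀) (hp : 1 ≤ p)
    (hdecay : ∀ j ∈ Finset.Icc 1 T, lam j ≤ R₀ * (j : ℝ) ^ (-p))
    (f : Fin k → Fin T) (hf : StrictMono f)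
    (hBpsd : (K.submatrix f f).PosSemidef)
    (mu : ℕ → ℝ)
    (hmu_dec : ∀ i j, 1 ≤ i → i ≤ j → j ≤ k → mu j ≤ mu i)
    (hmu_spec : ∃ σ : Equiv.Perm (Fin k), ∀ i : Fin k,
      mu ((i : ℕ) + 1) = hBpsd.1.eigenvalues (σ i))
    (α : ℝ) (hα0 : 0 < α) (hαR : α ≤ R₀)
    (hprod : α ^ (k - 1) < ∏ j ∈ Finset.Icc 1 (k - 1), mu j) :
    ((Nat.factorial (k - 1) : ℝ)) ^ p < (R₀ / α) ^ (k - 1) ∧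
      (k : ℝ) ≤ Real.exp 1 * (R₀ / α) ^ (1 / p) + 1 :=
  stmt5_general T k hk hkT K hpsd lam hlam_dec hlam_spec R₀ p hR hp hdecay f hf hBpsd mu hmu_dec
    hmu_spec α hα0 hprod
end
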